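/- Assume in addition that f″ > 0 (f is strictly convex) and let b_− < b_+. Then there exists no traveling-wave solution: there are no constant s and C¹ function b : ℝ → ℝ with Q∘b′ differentiable, b(−∞) = b_−, b(+∞) = b_+, b′(ξ) → 0 as |ξ| → ∞, such that u(t,x) = b(x − st) is a classical solution of u_t + f(u)_x = Q(u_x)_x (Section 2.2, case b_− < b_+). -/

import Mathlib

/-!
Along a traveling wave the equation becomes the ODE `(Q(b'))' = (f'(b) - s) b'`, which integrates
to `Q(b') - Q(0) = f(b) - f(b₋) - s (b - b₋)`. Letting `ξ → +∞` gives the Rankine–Hugoniot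
condition, so the right-hand side vanishes at `b₋` and `b₊`; strict convexity of `f` makes it
negative in between. As `Q` is increasing, `b' < 0` wherever `b₋ < b < b₊`, which is impossible
for a profile rising from `b₋` to `b₊`.
-/

open Set Filter Topology

lemma deriv_comp_const_sub_mul {b : ℝ → ℝ} (hb : Differentiable ℝ b) (x s t : ℝ) :
    deriv (fun τ => b (x - s * τ)) t = -s * deriv b (x - s * t) := by
  have h : HasDerivAt (fun τ => x - s * τ) (-s) t := by
    simpa using ((hasDerivAt_id t).const_mul s).const_sub x
  exact ((hb _).hasDerivAt.comp t h).deriv.trans (mul_comm _ _)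

theorem travelingWave_ode {f Q b : ℝ → ℝ} {s : ℝ} (hf : Differentiable ℝ f)
    (hb : Differentiable ℝ b)
    (hpde : ∀ t x : ℝ, 0 < t →
      deriv (fun τ => b (x - s * τ)) t + deriv (fun y => f (b (y - s * t))) x
        = deriv (fun y => Q (deriv (fun z => b (z - s * t)) y)) x)
    (ξ : ℝ) :
    deriv (fun ζ => Q (deriv b ζ)) ξ = (deriv f (b ξ) - s) * deriv b ξ := by
  have h := hpde 1 (ξ + s) one_pos
  have hfb : deriv (fun y => f (b y)) ξ = deriv f (b ξ) * deriv b ξ :=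
    ((hf _).hasDerivAt.comp ξ (hb ξ).hasDerivAt).deriv
  simp only [mul_one, deriv_comp_sub_const, deriv_comp_const_sub_mul hb] at h
  rw [deriv_comp_sub_const (f := fun y => f (b y)),
    deriv_comp_sub_const (f := fun y => Q (deriv b y)), add_sub_cancel_right, hfb] at h
  linear_combination -h

theorem travelingWave_energy_eq {f Q b : ℝ → ℝ} {s β : ℝ} {l : Filter ℝ} [l.NeBot]
    (hf : Differentiable ℝ f) (hQ : ContinuousAt Q 0) (hb : Differentiable ℝ b)
    (hQb : Differentiable ℝ (fun ξ => Q (deriv b ξ)))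
    (hode : ∀ ξ, deriv (fun ζ => Q (deriv b ζ)) ξ = (deriv f (b ξ) - s) * deriv b ξ)
    (hbl : Tendsto b l (𝓝 β)) (hb'l : Tendsto (deriv b) l (𝓝 0)) (ξ : ℝ) :
    Q (deriv b ξ) - f (b ξ) + s * b ξ = Q 0 - f β + s * β := by
  set g : ℝ → ℝ := fun ξ => Q (deriv b ξ) - f (b ξ) + s * b ξ
  have hg' : ∀ x, HasDerivAt g 0 x := fun x => by
    have h := (((hQb x).hasDerivAt.sub ((hf (b x)).hasDerivAt.comp x (hb x).hasDerivAt)).add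
      ((hb x).hasDerivAt.const_mul s))
    rwa [hode x, show (deriv f (b x) - s) * deriv b x - deriv f (b x) * deriv b x
      + s * deriv b x = 0 by ring] at h
  have hconst : g = fun _ => g ξ :=
    funext fun x => is_const_of_deriv_eq_zero (fun y => (hg' y).differentiableAt)
      (fun y => (hg' y).deriv) x ξ
  have hlim : Tendsto g l (𝓝 (Q 0 - f β + s * β)) :=
    ((hQ.tendsto.comp hb'l).sub ((hf.continuous.tendsto β).comp hbl)).add (hbl.const_mul s)
  rw [hconst] at hlim
  exact tendsto_nhds_unique tendsto_const_nhds hlim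

theorem StrictConvexOn.sub_mul_lt_of_eq {D : Set ℝ} {f : ℝ → ℝ} (hf : StrictConvexOn ℝ D f)
    {a c v s : ℝ} (ha : a ∈ D) (hc : c ∈ D) (hav : a < v) (hvc : v < c)
    (hac : f a - s * a = f c - s * c) : f v - s * v < f a - s * a := by
  have hφ : StrictConvexOn ℝ D (fun x => f x - s * x) :=
    hf.sub_concaveOn ((LinearMap.mul ℝ ℝ s).concaveOn hf.1)
  have h := hφ.lt_on_openSegment ha hc (hav.trans hvc).ne
    (Ioo_subset_openSegment ⟨hav, hvc⟩)
  rwa [← hac, max_self] at h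

theorem exists_deriv_nonneg_of_tendsto {b : ℝ → ℝ} (hb : Differentiable ℝ b) {bm bp : ℝ}
    (hlt : bm < bp) (hbm : Tendsto b atBot (𝓝 bm)) (hbp : Tendsto b atTop (𝓝 bp)) :
    ∃ ξ, b ξ ∈ Ioo bm bp ∧ 0 ≤ deriv b ξ := by
  obtain ⟨m, hbm_m, hm_bp⟩ := exists_between hlt
  obtain ⟨c, hc⟩ := (hbp.eventually_const_lt hm_bp).exists
  obtain ⟨a, hac, ha⟩ := ((eventually_le_atBot c).and (hbm.eventually_lt_const hbm_m)).exists
  by_contra! hneg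
  have hle := image_le_of_deriv_right_lt_deriv_boundary' (B := fun _ => m) (B' := 0)
    hb.continuous.continuousOn (fun x _ => (hb x).hasDerivAt.hasDerivWithinAt) ha.le
    continuousOn_const (fun x _ => hasDerivWithinAt_const x _ m)
    (fun x _ hx => hneg x (hx ▸ ⟨hbm_m, hm_bp⟩)) ⟨hac, le_rfl⟩
  exact hc.not_ge hle

theorem stmt_19_general (f Q : ℝ → ℝ)
    (hf : ContDiff ℝ 1 f)
    (hQ' : ∀ s : ℝ, 0 < deriv Q s)
    (hconv : ∀ s : ℝ, 0 < deriv (deriv f) s)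
    (bm bp : ℝ) (hlt : bm < bp) :
    ¬ ∃ (s : ℝ) (b : ℝ → ℝ),
      ContDiff ℝ 1 b ∧
      Differentiable ℝ (fun ξ => Q (deriv b ξ)) ∧
      Tendsto b atBot (nhds bm) ∧ Tendsto b atTop (nhds bp) ∧
      Tendsto (deriv b) atBot (nhds 0) ∧ Tendsto (deriv b) atTop (nhds 0) ∧
      (∀ t x : ℝ, 0 < t →
        deriv (fun τ => b (x - s * τ)) t
          + deriv (fun y => f (b (y - s * t))) x
          = deriv (fun y => Q (deriv (fun z => b (z - s * t)) y)) x) := by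
  rintro ⟨s, b, hb, hQb, hbm, hbp, hb'm, hb'p, hpde⟩
  have hbd := hb.differentiable one_ne_zero
  have hfd := hf.differentiable one_ne_zero
  have hQc : ContinuousAt Q 0 := (differentiableAt_of_deriv_ne_zero (hQ' 0).ne').continuousAt
  have hode := travelingWave_ode hfd hbd hpde
  have hbot := travelingWave_energy_eq hfd hQc hbd hQb hode hbm hb'm
  have htop := travelingWave_energy_eq hfd hQc hbd hQb hode hbp hb'p
  have hfconv : StrictConvexOn ℝ univ f :=
    strictConvexOn_of_deriv2_pos convex_univ hfd.continuous.continuousOn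
      fun x _ => by simpa using hconv x
  obtain ⟨ξ, ⟨hmξ, hξp⟩, hb'ξ⟩ := exists_deriv_nonneg_of_tendsto hbd hlt hbm hbp
  have hchord := hfconv.sub_mul_lt_of_eq (s := s) (mem_univ _) (mem_univ _) hmξ hξp
    (by linarith [hbot 0, htop 0])
  have hQneg : Q (deriv b ξ) < Q 0 := by linarith [hbot ξ]
  exact hb'ξ.not_gt ((strictMono_of_deriv_pos hQ').lt_iff_lt.mp hQneg)

/-- Section 2.2, case `b_- < b_+`: if `f` is strictly convex (`f'' > 0`) then there is no
classical traveling-wave solution `u(t,x) = b(x - s t)` of `u_t + f(u)_x = Q(u_x)_x`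
with `b(-∞) = b_- < b_+ = b(+∞)` and `b'(ξ) → 0` as `|ξ| → ∞`. -/
theorem stmt_19 (f Q : ℝ → ℝ) (Qm Qp : ℝ)
    (hf : ContDiff ℝ 1 f) (hQ : ContDiff ℝ 2 Q)
    (hf0 : f 0 = 0) (hQ0 : Q 0 = 0) (hQ' : ∀ s : ℝ, 0 < deriv Q s)
    (hQm : Tendsto Q atBot (nhds Qm)) (hQmneg : Qm < 0)
    (hQp : Tendsto Q atTop (nhds Qp)) (hQppos : 0 < Qp)
    (hf2 : Differentiable ℝ (deriv f)) (hconv : ∀ s : ℝ, 0 < deriv (deriv f) s)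
    (bm bp : ℝ) (hlt : bm < bp) :
    ¬ ∃ (s : ℝ) (b : ℝ → ℝ),
      ContDiff ℝ 1 b ∧
      Differentiable ℝ (fun ξ => Q (deriv b ξ)) ∧
      Tendsto b atBot (nhds bm) ∧ Tendsto b atTop (nhds bp) ∧
      Tendsto (deriv b) atBot (nhds 0) ∧ Tendsto (deriv b) atTop (nhds 0) ∧
      (∀ t x : ℝ, 0 < t →
        deriv (fun τ => b (x - s * τ)) t
          + deriv (fun y => f (b (y - s * t))) x
          = deriv (fun y => Q (deriv (fun z => b (z - s * t)) y)) x) :=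
  stmt_19_general f Q hf hQ' hconv bm bp hlt
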